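/- For every n ≥ 1 and every 1 ≤ i ≤ n, the following identity holds in the integral group algebra ℤ[𝔖_{n+1}]: (1 − t_i) · sh_{n+1} = (1 − t_i) · ∑_{B ⊆ {1,…,n}} D_i(σ_B), where t_i = (i, i+1) is the adjacent transposition and 1 is the identity of the group algebra. (This is the group-algebra identity underlying the paper's Proposition that the shuffle operator sh: As → As is a morphism of Lie-bimodules.) -/

import Mathlib

/-
Split the subsets `A ⊆ {1,…,n+1}` according to whether they contain both or neither of
`i, i+1` ("balanced") or exactly one of them. `σ_A` is the unique permutation listing `A`
increasingly and then `Aᶜ` increasingly. The balanced `A` are exactly the `B′_i(B)`, and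
`D_i(σ_B)` has this property for `B′_i(B)`, so the balanced part of `sh_{n+1}` is
`∑_B D_i(σ_B)`. For unbalanced `A`, `t_i` is increasing on `A` and on `Aᶜ`, so
`t_i σ_A = σ_{t_i A}`; hence `t_i` fixes the unbalanced part, which `1 - t_i` kills.
-/

/-- The shuffle permutation `σ_A` associated to a subset `A ⊆ {1,…,n}`:
positions `1,…,|A|` are sent, in order, to the elements of `A` listed increasingly,
and positions `|A|+1,…,n` are sent, in order, to the elements of the complement of `A`
listed increasingly.  (Here everything is 0-indexed, using `Fin n`.) -/
def shufflePerm {n : ℕ} (A : Finset (Fin n)) : Equiv.Perm (Fin n) :=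
  (finCongr (show n = A.card + Aᶜ.card from by
      have h1 : A.card ≤ n := by simpa using Finset.card_le_univ A
      have h2 : Aᶜ.card = n - A.card := by simp [Finset.card_compl]
      omega)).trans <|
  finSumFinEquiv.symm.trans <|
  (Equiv.sumCongr (A.orderIsoOfFin rfl).toEquiv
      ((Aᶜ.orderIsoOfFin rfl).toEquiv.trans
        (Equiv.subtypeEquivRight fun _ => Finset.mem_compl))).trans <|
  Equiv.sumCompl (· ∈ A)

/-- The inflation `D_i(σ) ∈ 𝔖_{n+1}` of a permutation `σ ∈ 𝔖_n`: in the one-line word of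
`σ`, every letter `ℓ > i` is replaced by `ℓ+1` and the letter `i` is replaced by the two
consecutive letters `i, i+1`.  (0-indexed: `i : Fin n`, and the two consecutive letters are
`i.castSucc, i.succ` in `Fin (n+1)`.)  This is the operadic composition `σ ∘_i m_2` in the
associative operad. -/
def inflate {n : ℕ} (σ : Equiv.Perm (Fin n)) (i : Fin n) : Equiv.Perm (Fin (n + 1)) :=
  (finSuccEquiv' ((σ⁻¹ i).succ)).trans ((Equiv.optionCongr σ).trans (finSuccEquiv' i.succ).symm)

/-- The subset `B′_i(B) ⊆ {1,…,n+1}`: elements of `B` below `i` are kept, elements of `B`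
above `i` are shifted up by one, and if `i ∈ B` then both `i` and `i+1` are included.
(0-indexed via `Fin.castSucc` and `Fin.succ`.) -/
def inflateSet {n : ℕ} (B : Finset (Fin n)) (i : Fin n) : Finset (Fin (n + 1)) :=
  ((B.filter (· < i)).image Fin.castSucc) ∪ ((B.filter (i < ·)).image Fin.succ) ∪
    (if i ∈ B then {i.castSucc, i.succ} else ∅)

/-- The shuffle element `sh_n = ∑_{A ⊆ {1,…,n}} σ_A` of the integral group algebra
`ℤ[𝔖_n]`. -/
noncomputable def sh (n : ℕ) : MonoidAlgebra ℤ (Equiv.Perm (Fin n)) :=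
  ∑ A : Finset (Fin n), MonoidAlgebra.of ℤ (Equiv.Perm (Fin n)) (shufflePerm A)

open Equiv Finset

namespace Fin

variable {n : ℕ}

lemma card_add_card_compl (A : Finset (Fin n)) : #A + #Aᶜ = n := by
  simp [A.card_add_card_compl]

lemma predAbove_succ_succAbove (p j : Fin n) : p.predAbove (p.succ.succAbove j) = j := by
  rcases le_or_gt j p with h | h
  · rw [Fin.succAbove_succ_of_le _ _ h, Fin.predAbove_castSucc_of_le _ _ h]
  · rw [Fin.succAbove_succ_of_lt _ _ h, Fin.predAbove_succ_of_le _ _ h.le]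

lemma eq_castSucc_and_eq_succ_of_predAbove_eq (p : Fin n) {x y : Fin (n + 1)} (hxy : x < y)
    (h : p.predAbove x = p.predAbove y) : x = p.castSucc ∧ y = p.succ := by
  simp only [Fin.predAbove, Fin.ext_iff, Fin.lt_def] at h hxy ⊢
  split_ifs at h with h₁ h₂ h₂ <;>
    simp only [Fin.val_pred, Fin.coe_castPred, Fin.val_castSucc, Fin.val_succ, not_lt]
      at h h₁ h₂ ⊢ <;> omega

theorem castSucc_covBy_succ (i : Fin n) : i.castSucc ⋖ i.succ := by
  refine ⟨Fin.castSucc_lt_succ, fun c h₁ h₂ => ?_⟩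
  rw [Fin.lt_def, Fin.val_castSucc] at h₁
  rw [Fin.lt_def, Fin.val_succ] at h₂
  omega

end Fin

theorem strictMonoOn_swap_of_covBy {α : Type*} [LinearOrder α] [DecidableEq α] {a b : α}
    (hab : a ⋖ b) {S : Set α} (hS : ¬(a ∈ S ∧ b ∈ S)) : StrictMonoOn (swap a b) S := by
  intro x hx y hy hxy
  have hne : ¬(x = a ∧ y = b) := by rintro ⟨rfl, rfl⟩; exact hS ⟨hx, hy⟩
  rcases eq_or_ne x a with rfl | hxa
  · have hyb : y ≠ b := fun h => hne ⟨rfl, h⟩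
    rw [swap_apply_left, swap_apply_of_ne_of_ne hxy.ne' hyb]
    exact (hab.ge_of_gt hxy).lt_of_ne' hyb
  rcases eq_or_ne y b with rfl | hyb
  · rw [swap_apply_right, swap_apply_of_ne_of_ne hxa hxy.ne]
    exact (hab.le_of_lt hxy).lt_of_ne hxa
  rcases eq_or_ne x b with rfl | hxb
  · rw [swap_apply_right, swap_apply_of_ne_of_ne (hab.lt.trans hxy).ne' hyb]
    exact hab.lt.trans hxy
  rcases eq_or_ne y a with rfl | hya
  · rw [swap_apply_left, swap_apply_of_ne_of_ne hxa hxb]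
    exact hxy.trans hab.lt
  rwa [swap_apply_of_ne_of_ne hxa hxb, swap_apply_of_ne_of_ne hya hyb]

section Shuffle

variable {m : ℕ}

-- `π` lists the elements of `A` increasingly, then those of `Aᶜ` increasingly.
structure IsShuffle (A : Finset (Fin m)) (π : Perm (Fin m)) : Prop where
  mem_of_le : ∀ ⦃k l⦄, k ≤ l → π l ∈ A → π k ∈ A
  lt_of_lt : ∀ ⦃k l⦄, k < l → (π k ∈ A ↔ π l ∈ A) → π k < π l

lemma shufflePerm_apply_of_lt (A : Finset (Fin m)) {k : Fin m} (h : (k : ℕ) < #A) :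
    shufflePerm A k = A.orderEmbOfFin rfl ⟨k, h⟩ := by
  have hk : finCongr (Fin.card_add_card_compl A).symm k = Fin.castAdd #Aᶜ ⟨k, h⟩ := by
    ext; simp
  simp only [shufflePerm, Equiv.trans_apply]
  rw [hk, finSumFinEquiv_symm_apply_castAdd]
  simp

lemma shufflePerm_apply_of_le (A : Finset (Fin m)) {k : Fin m} (h : #A ≤ (k : ℕ)) :
    shufflePerm A k = Aᶜ.orderEmbOfFin rfl
      ⟨k - #A, by have := Fin.card_add_card_compl A; omega⟩ := by
  have hk : finCongr (Fin.card_add_card_compl A).symm k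
      = Fin.natAdd #A ⟨k - #A, by have := Fin.card_add_card_compl A; omega⟩ := by
    ext
    simp only [finCongr_apply, Fin.val_cast, Fin.natAdd_mk]
    omega
  simp only [shufflePerm, Equiv.trans_apply]
  rw [hk, finSumFinEquiv_symm_apply_natAdd]
  simp

lemma shufflePerm_mem_iff (A : Finset (Fin m)) (k : Fin m) :
    shufflePerm A k ∈ A ↔ (k : ℕ) < #A := by
  refine ⟨fun hk => ?_, fun h => shufflePerm_apply_of_lt A h ▸ orderEmbOfFin_mem A rfl _⟩
  by_contra h
  rw [shufflePerm_apply_of_le A (not_lt.mp h)] at hk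
  exact mem_compl.mp (orderEmbOfFin_mem Aᶜ rfl _) hk

theorem isShuffle_shufflePerm (A : Finset (Fin m)) : IsShuffle A (shufflePerm A) where
  mem_of_le k l hkl hl := by
    rw [shufflePerm_mem_iff] at hl ⊢
    exact lt_of_le_of_lt hkl hl
  lt_of_lt k l hkl hA := by
    rw [shufflePerm_mem_iff, shufflePerm_mem_iff] at hA
    by_cases hl : (l : ℕ) < #A
    · rw [shufflePerm_apply_of_lt A hl, shufflePerm_apply_of_lt A (hA.mpr hl)]
      exact (A.orderEmbOfFin rfl).strictMono hkl
    · have hk := mt hA.mp hl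
      rw [shufflePerm_apply_of_le A (not_lt.mp hl), shufflePerm_apply_of_le A (not_lt.mp hk)]
      refine (Aᶜ.orderEmbOfFin rfl).strictMono ?_
      rw [Fin.lt_def] at hkl ⊢
      simp only
      omega

namespace IsShuffle

variable {A : Finset (Fin m)} {π : Perm (Fin m)}

-- The positions sent into `A` form an initial segment with `#A` elements.
theorem mem_iff_lt_card (hπ : IsShuffle A π) (k : Fin m) : π k ∈ A ↔ (k : ℕ) < #A := by
  set S := univ.filter fun j => π j ∈ A
  have hcard : #S = #A := by
    rw [← card_map π.toEmbedding]
    congr 1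
    ext x
    simp [S, mem_map_equiv]
  rw [← hcard]
  constructor
  · intro hk
    have : Iic k ⊆ S := fun j hj => by
      simpa [S] using hπ.mem_of_le (mem_Iic.mp hj) hk
    simpa [Fin.card_Iic] using card_le_card this
  · intro hk
    by_contra hnot
    have : S ⊆ Iio k := fun j hj => by
      simp only [S, mem_filter, mem_univ, true_and] at hj
      exact mem_Iio.mpr (lt_of_not_ge fun hkj => hnot (hπ.mem_of_le hkj hj))
    have := card_le_card this
    rw [Fin.card_Iio] at this
    omega

theorem eq_shufflePerm (hπ : IsShuffle A π) : π = shufflePerm A := by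
  have hcard := Fin.card_add_card_compl A
  ext k : 1
  rcases lt_or_ge (k : ℕ) #A with h | h
  · have key : (fun j : Fin #A => π ⟨j, by omega⟩) = A.orderEmbOfFin rfl :=
      orderEmbOfFin_unique rfl (fun j => (hπ.mem_iff_lt_card _).mpr j.2)
        fun j j' hjj' => hπ.lt_of_lt hjj' (by simp [hπ.mem_iff_lt_card])
    rw [shufflePerm_apply_of_lt A h, ← congrFun key ⟨k, h⟩]
  · have key : (fun j : Fin #Aᶜ => π ⟨#A + j, by omega⟩) = Aᶜ.orderEmbOfFin rfl :=
      orderEmbOfFin_unique rfl (fun j => by simp [hπ.mem_iff_lt_card])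
        fun j j' hjj' => hπ.lt_of_lt (Fin.mk_lt_mk.mpr (Nat.add_lt_add_left hjj' _))
          (by simp [hπ.mem_iff_lt_card])
    rw [shufflePerm_apply_of_le A h, ← congrFun key _]
    congr 1
    ext
    simp only
    omega

theorem mul_of_strictMonoOn {τ : Perm (Fin m)} (hπ : IsShuffle A π) (hτA : StrictMonoOn τ A)
    (hτAc : StrictMonoOn τ (A : Set (Fin m))ᶜ) :
    IsShuffle (A.map τ.toEmbedding) (τ * π) where
  mem_of_le k l hkl hl := by
    simp only [mem_map_equiv, Perm.coe_mul, Function.comp_apply, symm_apply_apply] at hl ⊢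
    exact hπ.mem_of_le hkl hl
  lt_of_lt k l hkl hA := by
    simp only [mem_map_equiv, Perm.coe_mul, Function.comp_apply, symm_apply_apply] at hA ⊢
    by_cases hl : π l ∈ A
    · exact hτA (hA.mpr hl) hl (hπ.lt_of_lt hkl hA)
    · exact hτAc (mt hA.mp hl) hl (hπ.lt_of_lt hkl hA)

end IsShuffle

theorem swap_mul_shufflePerm {a b : Fin m} (hab : a ⋖ b) {A : Finset (Fin m)}
    (hA : ¬(a ∈ A ↔ b ∈ A)) :
    swap a b * shufflePerm A = shufflePerm (A.map (swap a b).toEmbedding) :=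
  ((isShuffle_shufflePerm A).mul_of_strictMonoOn
    (strictMonoOn_swap_of_covBy hab (by simp only [mem_coe]; tauto))
    (strictMonoOn_swap_of_covBy hab (by simp only [Set.mem_compl_iff, mem_coe]; tauto))
    ).eq_shufflePerm

theorem of_swap_mul_sum_shufflePerm_unbalanced {a b : Fin m} (hab : a ⋖ b) :
    MonoidAlgebra.of ℤ (Perm (Fin m)) (swap a b) *
        ∑ A with ¬(a ∈ A ↔ b ∈ A), MonoidAlgebra.of ℤ (Perm (Fin m)) (shufflePerm A) =
      ∑ A with ¬(a ∈ A ↔ b ∈ A), MonoidAlgebra.of ℤ (Perm (Fin m)) (shufflePerm A) := by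
  rw [mul_sum]
  refine sum_equiv (swap a b).finsetCongr (fun A => ?_) fun A hA => ?_
  · simp only [mem_filter, mem_univ, true_and, finsetCongr_apply, mem_map_equiv, symm_swap,
      swap_apply_left, swap_apply_right]
    tauto
  · rw [← map_mul, swap_mul_shufflePerm hab (mem_filter.mp hA).2, finsetCongr_apply]

end Shuffle

section Inflate

variable {n : ℕ}

lemma mem_inflateSet {B : Finset (Fin n)} {i : Fin n} {y : Fin (n + 1)} :
    y ∈ inflateSet B i ↔ i.predAbove y ∈ B := by
  simp only [inflateSet, mem_union, mem_image, mem_filter]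
  constructor
  · rintro ((⟨ℓ, ⟨hℓ, hℓi⟩, rfl⟩ | ⟨ℓ, ⟨hℓ, hiℓ⟩, rfl⟩) | hy)
    · rwa [Fin.predAbove_castSucc_of_le _ _ hℓi.le]
    · rwa [Fin.predAbove_succ_of_le _ _ hiℓ.le]
    · split_ifs at hy with hi
      · rcases mem_insert.mp hy with rfl | hy
        · rwa [Fin.predAbove_castSucc_self]
        · rwa [mem_singleton.mp hy, Fin.predAbove_succ_self]
      · simp at hy
  · intro hy
    by_cases hyi : y = i.succ
    · subst hyi
      rw [Fin.predAbove_succ_self] at hy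
      simp [hy]
    rw [← Fin.succ_succAbove_predAbove hyi]
    rcases lt_trichotomy (i.predAbove y) i with h | h | h
    · rw [Fin.succAbove_succ_of_le _ _ h.le]
      exact Or.inl (Or.inl ⟨_, ⟨hy, h⟩, rfl⟩)
    · rw [h] at hy ⊢
      simp [hy]
    · rw [Fin.succAbove_succ_of_lt _ _ h]
      exact Or.inl (Or.inr ⟨_, ⟨hy, h⟩, rfl⟩)

section Apply

variable (σ : Perm (Fin n)) (i : Fin n)

lemma inflate_apply_succ_symm : inflate σ i (σ⁻¹ i).succ = i.succ := by
  simp [inflate, finSuccEquiv'_at]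

lemma inflate_apply_succ_succAbove (j : Fin n) :
    inflate σ i ((σ⁻¹ i).succ.succAbove j) = i.succ.succAbove (σ j) := by
  simp [inflate, finSuccEquiv'_succAbove]

lemma inflate_apply_castSucc_symm : inflate σ i (σ⁻¹ i).castSucc = i.castSucc := by
  rw [← Fin.succAbove_succ_self, inflate_apply_succ_succAbove]
  simp

lemma predAbove_inflate_apply (x : Fin (n + 1)) :
    i.predAbove (inflate σ i x) = σ ((σ⁻¹ i).predAbove x) := by
  rcases eq_or_ne x (σ⁻¹ i).succ with rfl | hx
  · rw [inflate_apply_succ_symm]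
    simp
  · obtain ⟨j, rfl⟩ := Fin.exists_succAbove_eq hx
    rw [inflate_apply_succ_succAbove, Fin.predAbove_succ_succAbove, Fin.predAbove_succ_succAbove]

end Apply

theorem isShuffle_inflate {B : Finset (Fin n)} {σ : Perm (Fin n)} (hσ : IsShuffle B σ)
    (i : Fin n) : IsShuffle (inflateSet B i) (inflate σ i) := by
  set p := σ⁻¹ i
  have hmem (x) : inflate σ i x ∈ inflateSet B i ↔ σ (p.predAbove x) ∈ B := by
    rw [mem_inflateSet, predAbove_inflate_apply]
  refine ⟨fun x y hxy hy => ?_, fun x y hxy hB => ?_⟩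
  · rw [hmem] at hy ⊢
    exact hσ.mem_of_le (p.predAbove_right_monotone hxy) hy
  rcases (p.predAbove_right_monotone hxy.le).lt_or_eq with hlt | heq
  · refine i.predAbove_right_monotone.reflect_lt ?_
    rw [predAbove_inflate_apply, predAbove_inflate_apply]
    exact hσ.lt_of_lt hlt (by rwa [← hmem, ← hmem])
  · obtain ⟨rfl, rfl⟩ := p.eq_castSucc_and_eq_succ_of_predAbove_eq hxy heq
    rw [inflate_apply_castSucc_symm, inflate_apply_succ_symm]
    exact Fin.castSucc_lt_succ

theorem inflate_shufflePerm (B : Finset (Fin n)) (i : Fin n) :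
    inflate (shufflePerm B) i = shufflePerm (inflateSet B i) :=
  (isShuffle_inflate (isShuffle_shufflePerm B) i).eq_shufflePerm

lemma image_predAbove_inflateSet (B : Finset (Fin n)) (i : Fin n) :
    (inflateSet B i).image i.predAbove = B := by
  ext ℓ
  simp only [mem_image, mem_inflateSet]
  constructor
  · rintro ⟨y, hy, rfl⟩
    exact hy
  · intro hℓ
    obtain ⟨y, rfl⟩ := i.predAbove_surjective ℓ
    exact ⟨y, hℓ, rfl⟩

lemma inflateSet_image_predAbove {A : Finset (Fin (n + 1))} {i : Fin n}
    (hA : i.castSucc ∈ A ↔ i.succ ∈ A) : inflateSet (A.image i.predAbove) i = A := by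
  ext y
  simp only [mem_inflateSet, mem_image]
  refine ⟨fun ⟨z, hz, hzy⟩ => ?_, fun hy => ⟨y, hy, rfl⟩⟩
  rcases lt_trichotomy z y with hlt | rfl | hlt
  · obtain ⟨rfl, rfl⟩ := i.eq_castSucc_and_eq_succ_of_predAbove_eq hlt hzy
    exact hA.mp hz
  · exact hz
  · obtain ⟨rfl, rfl⟩ := i.eq_castSucc_and_eq_succ_of_predAbove_eq hlt hzy.symm
    exact hA.mpr hz

theorem sum_inflate_shufflePerm (i : Fin n) :
    ∑ B : Finset (Fin n), MonoidAlgebra.of ℤ (Perm (Fin (n + 1))) (inflate (shufflePerm B) i) =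
      ∑ A with (i.castSucc ∈ A ↔ i.succ ∈ A),
        MonoidAlgebra.of ℤ (Perm (Fin (n + 1))) (shufflePerm A) := by
  refine sum_nbij' (inflateSet · i) (image i.predAbove) (fun B _ => ?_) (fun _ _ => mem_univ _)
    (fun B _ => image_predAbove_inflateSet B i)
    (fun A hA => inflateSet_image_predAbove (mem_filter.mp hA).2)
    (fun B _ => by rw [inflate_shufflePerm])
  simp [mem_inflateSet]

end Inflate

/-- In `ℤ[𝔖_{n+1}]`:
`(1 − t_i) · sh_{n+1} = (1 − t_i) · ∑_{B ⊆ {1,…,n}} D_i(σ_B)`. -/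
theorem one_sub_swap_mul_sh {n : ℕ} (i : Fin n) :
    (1 - MonoidAlgebra.of ℤ (Equiv.Perm (Fin (n + 1))) (Equiv.swap i.castSucc i.succ)) *
        sh (n + 1) =
      (1 - MonoidAlgebra.of ℤ (Equiv.Perm (Fin (n + 1))) (Equiv.swap i.castSucc i.succ)) *
        ∑ B : Finset (Fin n),
          MonoidAlgebra.of ℤ (Equiv.Perm (Fin (n + 1))) (inflate (shufflePerm B) i) := by
  have hkill : (1 - MonoidAlgebra.of ℤ (Perm (Fin (n + 1))) (swap i.castSucc i.succ)) *
      ∑ A with ¬(i.castSucc ∈ A ↔ i.succ ∈ A),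
        MonoidAlgebra.of ℤ (Perm (Fin (n + 1))) (shufflePerm A) = 0 := by
    rw [sub_mul, one_mul, of_swap_mul_sum_shufflePerm_unbalanced (Fin.castSucc_covBy_succ i),
      sub_self]
  rw [sh, ← sum_filter_add_sum_filter_not univ (fun A => i.castSucc ∈ A ↔ i.succ ∈ A), mul_add,
    hkill, add_zero, sum_inflate_shufflePerm]
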